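/- Let G be a compact abelian group with normalized Haar measure μ, F: G → ℝ continuous, and suppose there is a continuous character η: G → S¹ which is surjective and satisfies F̂(η) ≠ 0. Then for every ε > 0, μ({g ∈ G : sup_{h∈G} |F(g·h) − F(g·h⁻¹)| ≤ ε}) ≤ ε / (2|F̂(η)|). -/

import Mathlib

/-!
Write `c = F̂(η)`. Haar measure on a compact abelian group is invariant under translation and
inversion, so `∫ F(gh) η̄(h) = η(g) c` and `∫ F(gh⁻¹) η̄(h) = conj (η(g) c)`; on the almost
symmetric set this forces `2 |Im (η(g) c)| ≤ ε`. As `η` is surjective, `η_* μ` is the Haar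
probability measure of the circle, the image of Lebesgue measure under `t ↦ e^{2πit}`. After
rotating `c` to `‖c‖`, Jordan's inequality `4 |t| ≤ |sin 2πt|` for `|t| ≤ 1/4` (and its
translate by `1/2`) bounds the measure of `{z : |Im z| ≤ β}` by `β`.
-/

open MeasureTheory Real Set ComplexConjugate

section Characters

variable {G : Type*} [CommGroup G] [MeasurableSpace G] [MeasurableMul G] (μ : Measure G)
  [μ.IsMulLeftInvariant] (η : G →* Circle)

theorem integral_mul_left_mul_conj_char (f : G → ℂ) (g : G) :
    ∫ h, f (g * h) * conj (η h : ℂ) ∂μ = η g * ∫ h, f h * conj (η h : ℂ) ∂μ := by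
  rw [← integral_const_mul]
  conv_rhs => rw [← integral_mul_left_eq_self _ g]
  congr 1 with h
  simp only [← Circle.coe_inv_eq_conj, map_mul, mul_inv_rev]
  rw [mul_left_comm, ← Circle.coe_mul, mul_comm (η h)⁻¹, mul_inv_cancel_left]

theorem integral_mul_inv_mul_conj_char [MeasurableInv G] [μ.IsInvInvariant] (F : G → ℝ)
    (g : G) :
    ∫ h, (F (g * h⁻¹) : ℂ) * conj (η h : ℂ) ∂μ =
      conj (η g * ∫ h, (F h : ℂ) * conj (η h : ℂ) ∂μ) := by
  rw [← integral_mul_left_mul_conj_char, ← integral_conj,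
    ← integral_inv_eq_self (fun h ↦ (F (g * h⁻¹) : ℂ) * conj (η h : ℂ))]
  congr 1 with h
  simp only [inv_inv, map_inv, Circle.coe_inv_eq_conj, map_mul, Complex.conj_conj,
    Complex.conj_ofReal]

end Characters

section CompactGroup

variable {G : Type*} [CommGroup G] [TopologicalSpace G] [IsTopologicalGroup G] [CompactSpace G]
  [MeasurableSpace G] [BorelSpace G] (μ : Measure G) [μ.IsMulLeftInvariant] [μ.IsInvInvariant]
  [IsProbabilityMeasure μ] {η : G →* Circle} {F : G → ℝ}

theorem two_mul_abs_im_char_mul_le (hF : Continuous F) (hη : Continuous η) {g : G} {ε : ℝ}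
    (hg : ∀ h, |F (g * h) - F (g * h⁻¹)| ≤ ε) :
    2 * |((η g : ℂ) * ∫ h, (F h : ℂ) * conj (η h : ℂ) ∂μ).im| ≤ ε := by
  have hcont (φ : G → G) (hφ : Continuous φ) :
      Integrable (fun h ↦ (F (φ h) : ℂ) * conj (η h : ℂ)) μ := by
    refine Continuous.integrable_of_hasCompactSupport ?_ (HasCompactSupport.of_compactSpace _)
    fun_prop
  have hdiff : (η g : ℂ) * ∫ h, (F h : ℂ) * conj (η h : ℂ) ∂μ
      - conj ((η g : ℂ) * ∫ h, (F h : ℂ) * conj (η h : ℂ) ∂μ)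
      = ∫ h, ((F (g * h) - F (g * h⁻¹) : ℝ) : ℂ) * conj (η h : ℂ) ∂μ := by
    rw [← integral_mul_inv_mul_conj_char, ← integral_mul_left_mul_conj_char,
      ← integral_sub (hcont _ (by fun_prop)) (hcont _ (by fun_prop))]
    push_cast
    simp only [sub_mul]
  have hnorm := norm_integral_le_of_norm_le_const (μ := μ) (C := ε)
    (.of_forall fun h ↦ (show ‖((F (g * h) - F (g * h⁻¹) : ℝ) : ℂ) * conj (η h : ℂ)‖ ≤ ε by
      simpa [← Complex.ofReal_sub, Circle.norm_coe] using hg h))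
  rwa [← hdiff, Complex.sub_conj, probReal_univ, mul_one, norm_mul, Complex.norm_I, mul_one,
    Complex.norm_real, Real.norm_eq_abs, abs_mul, abs_two] at hnorm

end CompactGroup

noncomputable instance : MeasurableSpace Circle := borel Circle

instance : BorelSpace Circle := ⟨rfl⟩

instance : IsProbabilityMeasure (volume : Measure (AddCircle (1 : ℝ))) :=
  ⟨by rw [AddCircle.measure_univ, ENNReal.ofReal_one]⟩

namespace AddCircle

theorem surjective_toCircle_one : Function.Surjective (toCircle (T := 1)) := by
  simpa only [funext (homeomorphCircle_apply one_ne_zero)] using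
    (homeomorphCircle one_ne_zero).surjective

instance : ((volume : Measure (AddCircle (1 : ℝ))).map toCircle).IsMulLeftInvariant := by
  refine ⟨fun z ↦ ?_⟩
  obtain ⟨x, rfl⟩ := surjective_toCircle_one z
  have hcomm : (toCircle x * ·) ∘ toCircle = toCircle ∘ (x + ·) := by
    funext y
    simp [toCircle_add]
  rw [Measure.map_map (measurable_const_mul _) continuous_toCircle.measurable, hcomm,
    ← Measure.map_map continuous_toCircle.measurable (measurable_const_add x),
    map_add_left_eq_self]

theorem measurePreserving_toCircle (ν : Measure Circle) [ν.IsHaarMeasure]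
    [IsProbabilityMeasure ν] : MeasurePreserving (toCircle (T := 1)) volume ν := by
  have hmeas : Measurable (toCircle (T := 1)) := continuous_toCircle.measurable
  have : IsProbabilityMeasure ((volume : Measure (AddCircle (1 : ℝ))).map toCircle) :=
    Measure.isProbabilityMeasure_map hmeas.aemeasurable
  have : ((volume : Measure (AddCircle (1 : ℝ))).map toCircle).IsHaarMeasure :=
    Measure.isHaarMeasure_of_isCompact_nonempty_interior _ univ isCompact_univ (by simp)
      (by simp) (by simp)
  exact ⟨hmeas, Measure.isHaarMeasure_eq_of_isProbabilityMeasure _ _⟩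

end AddCircle

theorem four_mul_abs_le_abs_sin_two_pi_mul {v : ℝ} (hv : |v| ≤ 1 / 4) :
    4 * |v| ≤ |sin (2 * π * v)| := by
  have h := Real.mul_abs_le_abs_sin (x := 2 * π * v) (by
    rw [abs_mul, abs_of_pos two_pi_pos]; nlinarith [pi_pos])
  rwa [abs_mul, abs_of_pos two_pi_pos, ← mul_assoc,
    show 2 / π * (2 * π) = 4 by field_simp; norm_num] at h

theorem measure_abs_im_le_le (ν : Measure Circle) [ν.IsHaarMeasure] [IsProbabilityMeasure ν]
    (β : ℝ) : ν {z : Circle | |(z : ℂ).im| ≤ β} ≤ ENNReal.ofReal β := by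
  have hmeas : MeasurableSet {z : Circle | |(z : ℂ).im| ≤ β} :=
    measurableSet_le (by fun_prop) measurable_const
  have hsub : ((↑) : ℝ → AddCircle (1 : ℝ)) ⁻¹' (AddCircle.toCircle ⁻¹'
        {z : Circle | |(z : ℂ).im| ≤ β}) ∩ Ioc (-(1 / 4)) (-(1 / 4) + 1) ⊆
      Icc (-(β / 4)) (β / 4) ∪ Icc (1 / 2 - β / 4) (1 / 2 + β / 4) := by
    rintro v ⟨hv, hv₁, hv₂⟩
    have hsin : |sin (2 * π * v)| ≤ β := by
      rwa [mem_preimage, mem_preimage, mem_ofPred_eq, AddCircle.toCircle_apply_mk, Circle.coe_exp,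
        Complex.exp_ofReal_mul_I_im, div_one] at hv
    rcases le_or_gt v (1 / 4) with hle | hgt
    · have := four_mul_abs_le_abs_sin_two_pi_mul (abs_le.2 ⟨hv₁.le, hle⟩)
      exact .inl (abs_le.1 (by linarith))
    · have := four_mul_abs_le_abs_sin_two_pi_mul (v := v - 1 / 2)
        (abs_le.2 ⟨by linarith, by linarith⟩)
      rw [show 2 * π * (v - 1 / 2) = 2 * π * v - π by ring, sin_sub_pi, abs_neg] at this
      have := abs_le.1 (show |v - 1 / 2| ≤ β / 4 by linarith)
      exact .inr ⟨by linarith, by linarith⟩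
  calc ν {z : Circle | |(z : ℂ).im| ≤ β}
      = volume (((↑) : ℝ → AddCircle (1 : ℝ)) ⁻¹' (AddCircle.toCircle ⁻¹'
          {z : Circle | |(z : ℂ).im| ≤ β}) ∩ Ioc (-(1 / 4)) (-(1 / 4) + 1)) := by
        rw [← (AddCircle.measurePreserving_toCircle ν).measure_preimage
            hmeas.nullMeasurableSet,
          ← (AddCircle.measurePreserving_mk 1 _).measure_preimage
            (AddCircle.continuous_toCircle.measurable hmeas).nullMeasurableSet,
          Measure.restrict_apply' measurableSet_Ioc]
    _ ≤ volume (Icc (-(β / 4)) (β / 4)) + volume (Icc (1 / 2 - β / 4) (1 / 2 + β / 4)) :=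
        (measure_mono hsub).trans (measure_union_le _ _)
    _ = ENNReal.ofReal β := by
        rw [Real.volume_Icc, Real.volume_Icc]
        rcases le_or_gt 0 β with hβ | hβ
        · rw [← ENNReal.ofReal_add (by linarith) (by linarith)]
          ring_nf
        · rw [ENNReal.ofReal_of_nonpos (by linarith), ENNReal.ofReal_of_nonpos (by linarith),
            ENNReal.ofReal_of_nonpos hβ.le, add_zero]

theorem measure_abs_im_mul_le (ν : Measure Circle) [ν.IsHaarMeasure] [IsProbabilityMeasure ν]
    {c : ℂ} (hc : c ≠ 0) (δ : ℝ) :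
    ν {z : Circle | |((z : ℂ) * c).im| ≤ δ} ≤ ENNReal.ofReal (δ / ‖c‖) := by
  have hc' : 0 < ‖c‖ := norm_pos_iff.2 hc
  have hrot : {z : Circle | |((z : ℂ) * c).im| ≤ δ} =
      (Circle.exp (Complex.arg c) * ·) ⁻¹' {w : Circle | |(w : ℂ).im| ≤ δ / ‖c‖} := by
    ext z
    have : (z : ℂ) * c = ‖c‖ * (Circle.exp (Complex.arg c) * z : Circle) := by
      rw [Circle.coe_mul, Circle.coe_exp, ← mul_assoc, mul_comm (z : ℂ),
        Complex.norm_mul_exp_arg_mul_I]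
    rw [mem_ofPred_eq, mem_preimage, mem_ofPred_eq, this, Complex.im_ofReal_mul, abs_mul,
      abs_of_pos hc', le_div_iff₀ hc', mul_comm]
  rw [hrot, measure_preimage_mul]
  exact measure_abs_im_le_le ν _

theorem measure_almost_symmetric_le_general {G : Type*} [CommGroup G] [TopologicalSpace G]
    [IsTopologicalGroup G] [CompactSpace G] [MeasurableSpace G] [BorelSpace G]
    (μ : Measure G) [μ.IsHaarMeasure] [IsProbabilityMeasure μ]
    (F : G → ℝ) (hF : Continuous F)
    (η : G →* Circle) (hηc : Continuous η) (hηs : Function.Surjective η)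
    (hFη : ∫ h, (F h : ℂ) * (starRingEnd ℂ) (η h : ℂ) ∂μ ≠ 0)
    (ε : ℝ) :
    μ {g : G | ∀ h : G, |F (g * h) - F (g * h⁻¹)| ≤ ε} ≤
      ENNReal.ofReal
        (ε / (2 * ‖∫ h, (F h : ℂ) * (starRingEnd ℂ) (η h : ℂ) ∂μ‖)) := by
  set c := ∫ h, (F h : ℂ) * conj (η h : ℂ) ∂μ
  have hsub : {g : G | ∀ h : G, |F (g * h) - F (g * h⁻¹)| ≤ ε} ⊆
      η ⁻¹' {z : Circle | |((z : ℂ) * c).im| ≤ ε / 2} := fun g hg ↦ by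
    have := two_mul_abs_im_char_mul_le μ hF hηc hg
    rw [mem_preimage, mem_ofPred_eq]
    linarith
  have : (μ.map η).IsHaarMeasure :=
    μ.isHaarMeasure_map η hηc hηs (by rw [Filter.cocompact_eq_bot]; exact Filter.tendsto_bot)
  have : IsProbabilityMeasure (μ.map η) := Measure.isProbabilityMeasure_map hηc.aemeasurable
  calc μ {g : G | ∀ h : G, |F (g * h) - F (g * h⁻¹)| ≤ ε}
      ≤ μ.map η {z : Circle | |((z : ℂ) * c).im| ≤ ε / 2} := by
        rw [Measure.map_apply hηc.measurable (measurableSet_le (by fun_prop) measurable_const)]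
        exact measure_mono hsub
    _ ≤ ENNReal.ofReal (ε / (2 * ‖c‖)) := by
        rw [← div_div]
        exact measure_abs_im_mul_le (μ.map η) hFη _

/-- abstract core of Theorem 1. If `F : G → ℝ` is continuous on a compact
abelian group with normalized Haar measure `μ`, and `η` is a continuous surjective character
with `F̂(η) ≠ 0`, then for all `ε > 0`,
`μ {g : ∀ h, |F (g*h) - F (g*h⁻¹)| ≤ ε} ≤ ε / (2 |F̂(η)|)`. -/
theorem measure_almost_symmetric_le {G : Type*} [CommGroup G] [TopologicalSpace G]
    [IsTopologicalGroup G] [CompactSpace G] [MeasurableSpace G] [BorelSpace G]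
    (μ : Measure G) [μ.IsHaarMeasure] [IsProbabilityMeasure μ]
    (F : G → ℝ) (hF : Continuous F)
    (η : G →* Circle) (hηc : Continuous η) (hηs : Function.Surjective η)
    (hFη : ∫ h, (F h : ℂ) * (starRingEnd ℂ) (η h : ℂ) ∂μ ≠ 0)
    (ε : ℝ) (hε : 0 < ε) :
    μ {g : G | ∀ h : G, |F (g * h) - F (g * h⁻¹)| ≤ ε} ≤
      ENNReal.ofReal
        (ε / (2 * ‖∫ h, (F h : ℂ) * (starRingEnd ℂ) (η h : ℂ) ∂μ‖)) :=
  measure_almost_symmetric_le_general μ F hF η hηc hηs hFη ε
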